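/- arXiv:2404.08357 — 3 statements merged into one kernel-verified Lean document; each statement's English description precedes it below -/
import Mathlib

section
/- Let (a,δ),(b,ε) ∈ K̄×Λ and set μ = res_K(v_{a,δ}) and η = res_K(v_{b,ε}). If μ < η (i.e., μ(f) ≤ η(f) for all f ∈ K[x] and μ ≠ η), then δ < ε. -/
open Polynomial

noncomputable section

variable {K Λ : Type*} [Field K] [AddCommGroup Λ] [LinearOrder Λ] [IsOrderedAddMonoid Λ]

/-- `v` is a `Λ∪{∞}`-valued valuation (written additively) on the algebraic closure of `K`
with trivial support: `v b = ⊤ ↔ b = 0`. -/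
structure IsValOnField (v : AlgebraicClosure K → WithTop Λ) : Prop where
  map_mul : ∀ a b, v (a * b) = v a + v b
  min_le_add : ∀ a b, min (v a) (v b) ≤ v (a + b)
  eq_top_iff : ∀ a, v a = ⊤ ↔ a = 0

/-- A valuation on `K[x]` with trivial support whose restriction to `K` is `v`. -/
structure IsValOnPoly (v : AlgebraicClosure K → WithTop Λ)
    (μ : Polynomial K → WithTop Λ) : Prop where
  map_mul : ∀ f g, μ (f * g) = μ f + μ g
  min_le_add : ∀ f g, min (μ f) (μ g) ≤ μ (f + g)
  eq_top_iff : ∀ f, μ f = ⊤ ↔ f = 0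
  extends_v : ∀ c : K, μ (C c) = v (algebraMap K (AlgebraicClosure K) c)

/-- A valuation on `K̄[x]` with trivial support whose restriction to `K̄` is `v`. -/
structure IsValOnPolyBar (v : AlgebraicClosure K → WithTop Λ)
    (ν : Polynomial (AlgebraicClosure K) → WithTop Λ) : Prop where
  map_mul : ∀ f g, ν (f * g) = ν f + ν g
  min_le_add : ∀ f g, min (ν f) (ν g) ≤ ν (f + g)
  eq_top_iff : ∀ f, ν f = ⊤ ↔ f = 0
  extends_v : ∀ c : AlgebraicClosure K, ν (C c) = v c

/-- Restriction `res_K(ν)` of a valuation `ν` on `K̄[x]` to `K[x]`. -/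
def resK (ν : Polynomial (AlgebraicClosure K) → WithTop Λ) :
    Polynomial K → WithTop Λ :=
  fun f => ν (f.map (algebraMap K (AlgebraicClosure K)))

/-- The monomial valuation `v_{a,δ}` on `K̄[x]`:
`v_{a,δ}(Σ c_k (x−a)^k) = min_k (v(c_k) + kδ)`. -/
def monoVal (v : AlgebraicClosure K → WithTop Λ) (a : AlgebraicClosure K) (δ : Λ) :
    Polynomial (AlgebraicClosure K) → WithTop Λ :=
  fun f => (Finset.range (f.natDegree + 1)).inf
    fun k => v ((taylor a f).coeff k) + ((k • δ : Λ) : WithTop Λ)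

/-- The closed ball `B(a,δ) = {b ∈ K̄ : v(b−a) ≥ δ}`. -/
def cBall (v : AlgebraicClosure K → WithTop Λ) (a : AlgebraicClosure K) (δ : Λ) :
    Set (AlgebraicClosure K) := {b | (δ : WithTop Λ) ≤ v (b - a)}

/-- The open ball `B°(a,δ) = {b ∈ K̄ : v(b−a) > δ}`. -/
def oBall (v : AlgebraicClosure K → WithTop Λ) (a : AlgebraicClosure K) (δ : Λ) :
    Set (AlgebraicClosure K) := {b | (δ : WithTop Λ) < v (b - a)}

/-- The decomposition group `𝒟 = {σ ∈ Aut(K̄/K) : v ∘ σ = v}`. -/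
def decompGroup (v : AlgebraicClosure K → WithTop Λ) :
    Set (AlgebraicClosure K ≃ₐ[K] AlgebraicClosure K) := {σ | ∀ a, v (σ a) = v a}

/-- `deg_K c`, the degree of the minimal polynomial of `c` over `K`. -/
def degK (K : Type*) [Field K] (c : AlgebraicClosure K) : ℕ := (minpoly K c).natDegree

/-- `deg_K S = min {deg_K c : c ∈ S}`. -/
def degKSet (K : Type*) [Field K] (S : Set (AlgebraicClosure K)) : ℕ := sInf (degK K '' S)

/-- `Min_K S = {c ∈ S : deg_K c = deg_K S}`. -/
def MinK (K : Type*) [Field K] (S : Set (AlgebraicClosure K)) : Set (AlgebraicClosure K) :=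
  {c ∈ S | degK K c = degKSet K S}

/-- Pointwise order on valuations on a polynomial ring. -/
def valLE {R : Type*} [Semiring R] (μ η : Polynomial R → WithTop Λ) : Prop := ∀ f, μ f ≤ η f

/-- Strict pointwise order on valuations. -/
def valLT {R : Type*} [Semiring R] (μ η : Polynomial R → WithTop Λ) : Prop := valLE μ η ∧ μ ≠ η

/-- `Λ` is a divisible group. -/
def IsDivisible (Λ : Type*) [AddCommGroup Λ] : Prop :=
  ∀ (γ : Λ) (n : ℕ), 0 < n → ∃ γ', n • γ' = γ

/-- `IsEpsilon μ f e` says that `e = ε_μ(f) = max {(μ(f) − μ(∂_s f))/s : s ≥ 1, ∂_s f ≠ 0}`,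
where `∂_s` is the `s`-th Hasse–Schmidt derivative. It is expressed without division:
`μ f ≤ s•e + μ(∂_s f)` for all admissible `s`, with equality for at least one `s`. -/
def IsEpsilon (μ : Polynomial K → WithTop Λ) (f : Polynomial K) (e : Λ) : Prop :=
  (∀ s : ℕ, 1 ≤ s → hasseDeriv s f ≠ 0 →
      μ f ≤ ((s • e : Λ) : WithTop Λ) + μ (hasseDeriv s f)) ∧
  (∃ s : ℕ, 1 ≤ s ∧ hasseDeriv s f ≠ 0 ∧
      μ f = ((s • e : Λ) : WithTop Λ) + μ (hasseDeriv s f))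

/-- `Q` is an abstract key polynomial for `μ`: `Q` is monic and `ε_μ(f) < ε_μ(Q)` for every
nonconstant `f` of degree smaller than `deg Q`. -/
def IsAbstractKeyPol (μ : Polynomial K → WithTop Λ) (Q : Polynomial K) : Prop :=
  Q.Monic ∧ ∀ f : Polynomial K, 0 < f.natDegree → f.natDegree < Q.natDegree →
    ∀ e eQ : Λ, IsEpsilon μ f e → IsEpsilon μ Q eQ → e < eQ

/-!
Let `μ = v_{a,δ}`, `η = v_{b,ε}` and let `f ∈ K[x]` be of minimal degree with `μ f < η f`.
If the minimum defining `μ f` is attained at some `s ≥ 1`, i.e. `μ f = v(∂ₛf(a)) + sδ`, then by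
minimality `μ f < η f ≤ sε + η(∂ₛf) = sε + μ(∂ₛf) ≤ sε + v(∂ₛf(a))`, whence `δ < ε`.
Otherwise `f` is a `μ`-unit: `μ(f - f(a)) > v(f(a))`. Some power `f(a)^N` has the value of some
`π ∈ K`, and the unit `u = f(a)^N / π` is a root of positive value of some `W` over the valuation
ring of `K` whose constant term is a unit. Now `f^N / π` is `μ`-close to `u` but lies in the
maximal ideal of `η`, so `g = π^(deg W) W(f^N / π) ∈ K[x]` satisfies `η g = deg W • v π < μ g`,
contradicting `μ ≤ η`.
-/

namespace Polynomial

section Aux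

variable {R : Type*} [CommRing R]

theorem coeff_divX_iterate (p : R[X]) (d n : ℕ) : (divX^[d] p).coeff n = p.coeff (n + d) := by
  induction d generalizing p with
  | zero => rfl
  | succ d ih => rw [Function.iterate_succ_apply, ih, coeff_divX, add_assoc]

theorem X_pow_mul_divX_iterate_add (p : R[X]) (d : ℕ) :
    X ^ d * divX^[d] p + ∑ i ∈ Finset.range d, C (p.coeff i) * X ^ i = p := by
  induction d generalizing p with
  | zero => simp
  | succ d ih =>
    conv_rhs => rw [← X_mul_divX_add p, ← ih (divX p)]
    simp only [Function.iterate_succ_apply, Finset.sum_range_succ', coeff_divX, pow_succ',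
      pow_zero, mul_one, Finset.mul_sum, mul_add, ← add_assoc, mul_assoc, mul_left_comm X]

theorem map_hasseDeriv {S : Type*} [CommRing S] (φ : R →+* S) (f : R[X]) (s : ℕ) :
    (hasseDeriv s f).map φ = hasseDeriv s (f.map φ) := by
  ext k
  rw [coeff_map, hasseDeriv_coeff, hasseDeriv_coeff, coeff_map, map_mul, map_natCast]

theorem taylor_hasseDeriv (r : R) (s : ℕ) (f : R[X]) :
    taylor r (hasseDeriv s f) = hasseDeriv s (taylor r f) := by
  ext k
  rw [taylor_coeff, hasseDeriv_coeff, taylor_coeff, ← LinearMap.comp_apply, hasseDeriv_comp,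
    Nat.choose_symm_add]
  simp [nsmul_eq_mul]

end Aux

theorem map_aeval_scaleRoots {L : Type*} [CommRing L] [Algebra K L] (W y : K[X]) (π : K)
    {T : L[X]} (hT : C (algebraMap K L π) * T = y.map (algebraMap K L)) :
    (aeval y (W.scaleRoots π)).map (algebraMap K L) =
      C (algebraMap K L π) ^ W.natDegree * aeval T W := by
  have hφ : (mapRingHom (algebraMap K L)).comp (algebraMap K K[X]) = algebraMap K L[X] := by
    ext; simp
  rw [aeval_def, ← coe_mapRingHom, hom_eval₂, hφ, coe_mapRingHom, ← hT, ← algebraMap_apply,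
    scaleRoots_eval₂_mul, aeval_def, algebraMap_apply]

end Polynomial

namespace AddValuation

section CommRing

variable {R Γ₀ : Type*} [CommRing R] [LinearOrderedAddCommMonoidWithTop Γ₀]
  (ν : AddValuation R Γ₀)

theorem pos_of_lt_map_mul {a b : R} (h : ν a < ν (a * b)) : 0 < ν b := by
  rw [ν.map_mul] at h
  exact lt_of_not_ge fun hb => h.not_ge (by simpa using add_le_add_right hb (ν a))

theorem pos_map_pow_sub_pow {r s : R} (hr : 0 ≤ ν r) (hsr : 0 < ν (s - r)) (n : ℕ) :
    0 < ν (s ^ n - r ^ n) := by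
  have hs : 0 ≤ ν s := by
    simpa using (le_min hr hsr.le).trans (ν.map_add r (s - r))
  rw [← geom_sum₂_mul, ν.map_mul]
  refine hsr.trans_le (le_add_of_nonneg_left (ν.map_le_sum fun i _ => ?_))
  rw [ν.map_mul, ν.map_pow, ν.map_pow]
  exact add_nonneg (nsmul_nonneg hs _) (nsmul_nonneg hr _)

variable {A : Type*} [CommSemiring A] [Algebra A R] {W : A[X]}
  (hW : ∀ i, 0 ≤ ν (algebraMap A R (W.coeff i)))
include hW

theorem pos_map_aeval_sub_aeval {r s : R} (hr : 0 ≤ ν r) (hsr : 0 < ν (s - r)) :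
    0 < ν (aeval s W - aeval r W) := by
  rw [aeval_eq_sum_range, aeval_eq_sum_range, ← Finset.sum_sub_distrib]
  refine ν.map_lt_sum hsr.ne_top fun i _ => ?_
  rw [← smul_sub, Algebra.smul_def, ν.map_mul]
  exact (ν.pos_map_pow_sub_pow hr hsr i).trans_le (le_add_of_nonneg_left (hW i))

theorem pos_map_aeval_of_pos_map_sub {r s : R} (hr : 0 ≤ ν r) (hWr : 0 < ν (aeval r W))
    (hsr : 0 < ν (s - r)) : 0 < ν (aeval s W) := by
  simpa using (lt_min hWr (ν.pos_map_aeval_sub_aeval hW hr hsr)).trans_le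
    (ν.map_add (aeval r W) (aeval s W - aeval r W))

theorem map_aeval_eq_zero_of_pos (hW0 : ν (algebraMap A R (W.coeff 0)) = 0) {s : R}
    (hs : 0 < ν s) : ν (aeval s W) = 0 := by
  have h := ν.pos_map_aeval_sub_aeval hW (by simp) (r := 0) (s := s) (by simpa using hs)
  rw [← coeff_zero_eq_aeval_zero', ← hW0] at h
  rw [← add_sub_cancel (algebraMap A R (W.coeff 0)) (aeval s W), ν.map_add_eq_of_lt_left h, hW0]

end CommRing

section Field

variable {L : Type*} [Field L] [Algebra K L] (w : AddValuation L (WithTop Λ))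

theorem exists_ne_map_le_of_sum_eq_zero {ι : Type*} [DecidableEq ι] {s : Finset ι} {f : ι → L}
    (hs : ∑ i ∈ s, f i = 0) {j : ι} (hj : j ∈ s) (hfj : f j ≠ 0) :
    ∃ i ∈ s, i ≠ j ∧ w (f i) ≤ w (f j) := by
  by_contra! h
  have hlt := w.map_lt_sum (w.ne_top_iff.mpr hfj) (s := s.erase j) (f := f)
    fun i hi => h i (Finset.mem_of_mem_erase hi) (Finset.ne_of_mem_erase hi)
  rw [eq_neg_of_add_eq_zero_right ((Finset.add_sum_erase s f hj).trans hs), w.map_neg] at hlt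
  exact lt_irrefl _ hlt

theorem map_div_eq_nsmul {a b : L} (hb : b ≠ 0) {i j : ℕ} (hij : i ≤ j) {A : Λ}
    (h : w a + i • (A : WithTop Λ) = w b + j • (A : WithTop Λ)) :
    w (a / b) = (j - i) • (A : WithTop Λ) := by
  have hab : w (a / b) + w b = w a := by rw [← w.map_mul, div_mul_cancel₀ _ hb]
  refine WithTop.add_right_cancel (w.ne_top_iff.mpr hb) (WithTop.add_right_cancel
    (z := i • (A : WithTop Λ)) (by simp [← WithTop.coe_nsmul]) ?_)
  rw [hab, h, ← Nat.sub_add_cancel hij, add_nsmul, Nat.add_sub_cancel]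
  abel

variable [Algebra.IsAlgebraic K L]

theorem exists_map_algebraMap_eq_nsmul {x : L} (hx : x ≠ 0) :
    ∃ N : ℕ, 0 < N ∧ ∃ π : K, π ≠ 0 ∧ w (algebraMap K L π) = N • w x := by
  classical
  set p := minpoly K x
  set t : ℕ → L := fun i => algebraMap K L (p.coeff i) * x ^ i
  have hp : p ≠ 0 := minpoly.ne_zero (Algebra.IsIntegral.isIntegral x)
  have hsum : ∑ i ∈ Finset.range (p.natDegree + 1), t i = 0 := by
    simpa [t, aeval_eq_sum_range, Algebra.smul_def] using minpoly.aeval K x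
  have hwt : ∀ i, w (t i) = w (algebraMap K L (p.coeff i)) + i • w x := fun i => by
    simp [t, w.map_mul, w.map_pow]
  have htop : ∀ i, w (t i) ≠ ⊤ → p.coeff i ≠ 0 := fun i h h0 => h (by simp [t, h0])
  obtain ⟨j, hj, hmin⟩ := Finset.exists_min_image (Finset.range (p.natDegree + 1))
    (fun i => w (t i)) ⟨p.natDegree, Finset.self_mem_range_succ _⟩
  have htj : w (t j) ≠ ⊤ := ne_top_of_le_ne_top (w.ne_top_iff.mpr (mul_ne_zero
    ((_root_.map_ne_zero _).mpr (leadingCoeff_ne_zero.mpr hp)) (pow_ne_zero _ hx)))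
    (hmin _ (Finset.self_mem_range_succ _))
  obtain ⟨i, hi, hij, hle⟩ :=
    w.exists_ne_map_le_of_sum_eq_zero hsum hj (fun h => htj (by simp [h]))
  have heq : w (t i) = w (t j) := le_antisymm hle (hmin i hi)
  lift w x to Λ using w.ne_top_iff.mpr hx with A hA
  have key : ∀ m n, m < n → w (t m) = w (t n) → w (t n) ≠ ⊤ → ∃ N : ℕ, 0 < N ∧
      ∃ π : K, π ≠ 0 ∧ w (algebraMap K L π) = N • (A : WithTop Λ) := by
    intro m n hmn hmn_eq htn
    refine ⟨n - m, by omega, p.coeff m / p.coeff n,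
      div_ne_zero (htop m (hmn_eq ▸ htn)) (htop n htn), ?_⟩
    rw [map_div₀]
    exact w.map_div_eq_nsmul (by simpa using htop n htn) hmn.le (by rwa [← hwt, ← hwt])
  rcases lt_or_gt_of_ne hij with h | h
  · exact key i j h heq htj
  · exact key j i h heq.symm (heq ▸ htj)

theorem exists_aeval_pos_of_map_eq_zero {u : L} (hu : w u = 0) :
    ∃ W : K[X], (∀ i, 0 ≤ w (algebraMap K L (W.coeff i))) ∧
      w (algebraMap K L (W.coeff 0)) = 0 ∧ 0 < w (aeval u W) := by
  classical
  set q := minpoly K u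
  have hq : q ≠ 0 := minpoly.ne_zero (Algebra.IsIntegral.isIntegral u)
  obtain ⟨j, hj, hmin⟩ := q.support.exists_min_image (fun i => w (algebraMap K L (q.coeff i)))
    (nonempty_support_iff.mpr hq)
  have hqj : q.coeff j ≠ 0 := mem_support_iff.mp hj
  set r := C (q.coeff j)⁻¹ * q
  have hr : ∀ i, 0 ≤ w (algebraMap K L (r.coeff i)) := by
    intro i
    by_cases hi : q.coeff i = 0
    · simp [r, hi]
    have hfin : w (algebraMap K L (q.coeff j)) ≠ ⊤ := w.ne_top_iff.mpr (by simpa using hqj)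
    have h := hmin i (mem_support_iff.mpr hi)
    rw [show q.coeff i = q.coeff j * r.coeff i by simp [r, hqj], _root_.map_mul, w.map_mul] at h
    exact WithTop.le_of_add_le_add_left hfin (by simpa using h)
  -- Dividing `r` by `X ^ d`, for the least `d` with `w (r_d) = 0`, makes the constant term a
  -- unit, while the discarded terms `r_i u ^ i`, `i < d`, all have positive value.
  have hex : ∃ d, w (algebraMap K L (r.coeff d)) = 0 := ⟨j, by simp [r, hqj]⟩
  set d := Nat.find hex
  refine ⟨divX^[d] r, fun i => by simpa [coeff_divX_iterate] using hr (i + d),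
    by simpa [coeff_divX_iterate] using Nat.find_spec hex, ?_⟩
  have hlow : 0 < w (∑ i ∈ Finset.range d, algebraMap K L (r.coeff i) * u ^ i) := by
    refine w.map_lt_sum (by simp) fun i hi => ?_
    rw [w.map_mul, w.map_pow, hu, nsmul_zero, add_zero]
    exact (hr i).lt_of_ne' (Nat.find_min hex (Finset.mem_range.mp hi))
  have hrel : u ^ d * aeval u (divX^[d] r) =
      -∑ i ∈ Finset.range d, algebraMap K L (r.coeff i) * u ^ i := by
    have h := congrArg (aeval u) (X_pow_mul_divX_iterate_add r d)
    rw [_root_.map_add, _root_.map_mul, _root_.map_pow, aeval_X, map_sum,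
      show aeval u r = 0 by simp [r, q]] at h
    simp only [_root_.map_mul, aeval_C, _root_.map_pow, aeval_X] at h
    exact eq_neg_of_add_eq_zero_left h
  have h := congrArg w hrel
  rw [w.map_mul, w.map_pow, hu, nsmul_zero, zero_add, w.map_neg] at h
  rwa [h]

end Field

end AddValuation

namespace Polynomial

section GaussValuation

variable {L : Type*} [Field L] (w : AddValuation L (WithTop Λ)) (δ : Λ)

def gaussVal (P : L[X]) : WithTop Λ :=
  (Finset.range (P.natDegree + 1)).inf fun k => w (P.coeff k) + ((k • δ : Λ) : WithTop Λ)

variable {w δ}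

theorem le_gaussVal_iff {c : WithTop Λ} {P : L[X]} :
    c ≤ gaussVal w δ P ↔ ∀ k, c ≤ w (P.coeff k) + ((k • δ : Λ) : WithTop Λ) := by
  refine Finset.le_inf_iff.trans ⟨fun h k => ?_, fun h k _ => h k⟩
  by_cases hk : k ≤ P.natDegree
  · exact h k (Finset.mem_range_succ_iff.mpr hk)
  · simp [coeff_eq_zero_of_natDegree_lt (not_le.mp hk)]

theorem gaussVal_le (P : L[X]) (k : ℕ) :
    gaussVal w δ P ≤ w (P.coeff k) + ((k • δ : Λ) : WithTop Λ) :=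
  le_gaussVal_iff.mp le_rfl k

theorem exists_gaussVal_eq (P : L[X]) :
    ∃ k, gaussVal w δ P = w (P.coeff k) + ((k • δ : Λ) : WithTop Λ) :=
  let ⟨k, _, hk⟩ := Finset.exists_mem_eq_inf _ ⟨0, by simp⟩ _
  ⟨k, hk⟩

theorem gaussVal_C (c : L) : gaussVal w δ (C c) = w c := by
  simp [gaussVal]

theorem min_le_gaussVal_add (P Q : L[X]) :
    min (gaussVal w δ P) (gaussVal w δ Q) ≤ gaussVal w δ (P + Q) := by
  refine le_gaussVal_iff.mpr fun k => ?_
  calc min (gaussVal w δ P) (gaussVal w δ Q)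
      ≤ min (w (P.coeff k)) (w (Q.coeff k)) + ((k • δ : Λ) : WithTop Λ) := by
        rw [← min_add_add_right]; exact min_le_min (gaussVal_le P k) (gaussVal_le Q k)
    _ ≤ w ((P + Q).coeff k) + ((k • δ : Λ) : WithTop Λ) := by
        rw [coeff_add]; gcongr; exact w.map_add _ _

theorem map_coeff_mul_coeff_add_nsmul (P Q : L[X]) (i j : ℕ) :
    w (P.coeff i * Q.coeff j) + (((i + j) • δ : Λ) : WithTop Λ) =
      (w (P.coeff i) + ((i • δ : Λ) : WithTop Λ)) +
        (w (Q.coeff j) + ((j • δ : Λ) : WithTop Λ)) := by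
  rw [w.map_mul, add_nsmul, WithTop.coe_add, add_add_add_comm]

theorem gaussVal_add_le_gaussVal_mul (P Q : L[X]) :
    gaussVal w δ P + gaussVal w δ Q ≤ gaussVal w δ (P * Q) := by
  refine le_gaussVal_iff.mpr fun k => ?_
  rw [coeff_mul]
  obtain ⟨p, hp, hmin⟩ := Finset.exists_min_image (Finset.HasAntidiagonal.antidiagonal k)
    (fun p => w (P.coeff p.1 * Q.coeff p.2)) ⟨(0, k), by simp⟩
  calc gaussVal w δ P + gaussVal w δ Q
      ≤ w (P.coeff p.1 * Q.coeff p.2) + ((k • δ : Λ) : WithTop Λ) := by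
        rw [← Finset.HasAntidiagonal.mem_antidiagonal.mp hp, map_coeff_mul_coeff_add_nsmul]
        exact add_le_add (gaussVal_le P _) (gaussVal_le Q _)
    _ ≤ _ := by gcongr; exact w.map_le_sum hmin

theorem gaussVal_lt_of_lt_find {P : L[X]} [DecidablePred fun k =>
      gaussVal w δ P = w (P.coeff k) + ((k • δ : Λ) : WithTop Λ)] {k : ℕ}
    (hk : k < Nat.find (exists_gaussVal_eq (w := w) (δ := δ) P)) :
    gaussVal w δ P < w (P.coeff k) + ((k • δ : Λ) : WithTop Λ) :=
  (gaussVal_le P k).lt_of_ne (Nat.find_min _ hk)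

theorem gaussVal_mul (P Q : L[X]) :
    gaussVal w δ (P * Q) = gaussVal w δ P + gaussVal w δ Q := by
  classical
  refine le_antisymm ?_ (gaussVal_add_le_gaussVal_mul P Q)
  by_cases htop : gaussVal w δ P = ⊤ ∨ gaussVal w δ Q = ⊤
  · rcases htop with h | h <;> simp [h]
  push Not at htop
  set i := Nat.find (exists_gaussVal_eq (w := w) (δ := δ) P)
  set j := Nat.find (exists_gaussVal_eq (w := w) (δ := δ) Q)
  have hi := Nat.find_spec (exists_gaussVal_eq (w := w) (δ := δ) P)
  have hj := Nat.find_spec (exists_gaussVal_eq (w := w) (δ := δ) Q)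
  have hij : w (P.coeff i * Q.coeff j) + (((i + j) • δ : Λ) : WithTop Λ) =
      gaussVal w δ P + gaussVal w δ Q := by rw [map_coeff_mul_coeff_add_nsmul, ← hi, ← hj]
  have hfin : w (P.coeff i * Q.coeff j) ≠ ⊤ := fun h => by
    rw [h, top_add] at hij; exact WithTop.add_ne_top.mpr htop hij.symm
  -- `i` and `j` are the least indices attaining the minima, so every other `(k, l)` with
  -- `k + l = i + j` has `k < i` or `l < j`
  have hrest : ∀ p ∈ (Finset.HasAntidiagonal.antidiagonal (i + j)).erase (i, j),
      w (P.coeff i * Q.coeff j) < w (P.coeff p.1 * Q.coeff p.2) := by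
    rintro ⟨k, l⟩ hkl
    obtain ⟨hne, hkl⟩ := Finset.mem_erase.mp hkl
    rw [Finset.HasAntidiagonal.mem_antidiagonal] at hkl
    rw [← WithTop.add_lt_add_iff_right (WithTop.coe_ne_top (a := (i + j) • δ)), hij, ← hkl,
      map_coeff_mul_coeff_add_nsmul]
    rcases lt_or_ge k i with hk | hk
    · exact WithTop.add_lt_add_of_lt_of_le htop.2 (gaussVal_lt_of_lt_find hk) (gaussVal_le Q l)
    · have hl : l < j := by
        by_contra hl; exact hne (Prod.ext (by omega) (by omega))
      exact WithTop.add_lt_add_of_le_of_lt htop.1 (gaussVal_le P k) (gaussVal_lt_of_lt_find hl)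
  calc gaussVal w δ (P * Q)
      ≤ w ((P * Q).coeff (i + j)) + (((i + j) • δ : Λ) : WithTop Λ) := gaussVal_le _ _
    _ = gaussVal w δ P + gaussVal w δ Q := by
        rw [coeff_mul, ← Finset.add_sum_erase _ _ (Finset.HasAntidiagonal.mem_antidiagonal.mpr
          (rfl : (i, j).1 + (i, j).2 = i + j)), w.map_add_eq_of_lt_left (w.map_lt_sum hfin hrest),
          hij]

variable (w δ) in
def gaussValuation : AddValuation L[X] (WithTop Λ) :=
  AddValuation.of (gaussVal w δ) (by simpa using gaussVal_C (w := w) (δ := δ) 0)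
    (by simpa using gaussVal_C (w := w) (δ := δ) 1) min_le_gaussVal_add gaussVal_mul

theorem gaussVal_le_nsmul_add_gaussVal_hasseDeriv (P : L[X]) (s : ℕ) :
    gaussVal w δ P ≤ ((s • δ : Λ) : WithTop Λ) + gaussVal w δ (hasseDeriv s P) := by
  obtain ⟨k, hk⟩ := exists_gaussVal_eq (w := w) (δ := δ) (hasseDeriv s P)
  have hchoose : 0 ≤ w ((k + s).choose s : L) := by
    simpa using w.map_le_sum (s := Finset.range ((k + s).choose s)) (f := fun _ => (1 : L))
      (g := 0) (by simp)
  rw [hk, hasseDeriv_coeff, w.map_mul]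
  calc gaussVal w δ P
      ≤ w (P.coeff (k + s)) + (((k + s) • δ : Λ) : WithTop Λ) := gaussVal_le _ _
    _ = ((s • δ : Λ) : WithTop Λ) +
          (w (P.coeff (k + s)) + ((k • δ : Λ) : WithTop Λ)) := by
        rw [add_nsmul, WithTop.coe_add]; abel
    _ ≤ _ := by gcongr; exact le_add_of_nonneg_left hchoose

end GaussValuation

section MonomialValuation

variable {L : Type*} [Field L] (w : AddValuation L (WithTop Λ))

def monomialValuation (a : L) (δ : Λ) : AddValuation L[X] (WithTop Λ) :=
  (gaussValuation w δ).comap (taylorAlgHom a : L[X] →+* L[X])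

variable {w} {a : L} {δ : Λ}

theorem monomialValuation_apply (P : L[X]) :
    monomialValuation w a δ P = gaussVal w δ (taylor a P) := rfl

theorem monomialValuation_C (c : L) : monomialValuation w a δ (C c) = w c := by
  rw [monomialValuation_apply, taylor_C, gaussVal_C]

theorem monomialValuation_le (P : L[X]) (k : ℕ) :
    monomialValuation w a δ P ≤ w ((taylor a P).coeff k) + ((k • δ : Λ) : WithTop Λ) :=
  gaussVal_le _ k

theorem monomialValuation_le_map_eval (P : L[X]) : monomialValuation w a δ P ≤ w (P.eval a) := by
  simpa [taylor_coeff_zero] using monomialValuation_le (a := a) (δ := δ) P 0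

theorem monomialValuation_le_nsmul_add_hasseDeriv (P : L[X]) (s : ℕ) :
    monomialValuation w a δ P ≤
      ((s • δ : Λ) : WithTop Λ) + monomialValuation w a δ (hasseDeriv s P) := by
  simpa only [monomialValuation_apply, taylor_hasseDeriv] using
    gaussVal_le_nsmul_add_gaussVal_hasseDeriv (taylor a P) s

theorem lt_of_monomialValuation_eq_of_lt {b : L} {ε : Λ} {F : L[X]} {s : ℕ}
    (hF : monomialValuation w a δ F = w ((taylor a F).coeff s) + ((s • δ : Λ) : WithTop Λ))
    (hlt : monomialValuation w a δ F < monomialValuation w b ε F)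
    (hs : monomialValuation w b ε (hasseDeriv s F) ≤ monomialValuation w a δ (hasseDeriv s F)) :
    δ < ε := by
  rw [taylor_coeff] at hF
  set c := (hasseDeriv s F).eval a
  have hc : w c ≠ ⊤ := fun h => by rw [hF, h, top_add] at hlt; exact not_top_lt hlt
  have h := calc w c + ((s • δ : Λ) : WithTop Λ)
      = monomialValuation w a δ F := hF.symm
    _ < monomialValuation w b ε F := hlt
    _ ≤ ((s • ε : Λ) : WithTop Λ) + monomialValuation w b ε (hasseDeriv s F) :=
        monomialValuation_le_nsmul_add_hasseDeriv F s
    _ ≤ ((s • ε : Λ) : WithTop Λ) + monomialValuation w a δ (hasseDeriv s F) := by gcongr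
    _ ≤ ((s • ε : Λ) : WithTop Λ) + w c := by
        gcongr; exact monomialValuation_le_map_eval _
    _ = w c + ((s • ε : Λ) : WithTop Λ) := add_comm _ _
  exact lt_of_nsmul_lt_nsmul_right s
    (WithTop.coe_lt_coe.mp ((WithTop.add_lt_add_iff_left hc).mp h))

theorem map_eval_lt_monomialValuation_sub_C {P : L[X]} (hP : monomialValuation w a δ P ≠ ⊤)
    (h : ∀ k, 0 < k →
      monomialValuation w a δ P ≠ w ((taylor a P).coeff k) + ((k • δ : Λ) : WithTop Λ)) :
    w (P.eval a) < monomialValuation w a δ (P - C (P.eval a)) := by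
  obtain ⟨k, hk⟩ := exists_gaussVal_eq (w := w) (δ := δ) (taylor a P)
  obtain rfl : k = 0 := by
    by_contra hk0; exact h k (Nat.pos_of_ne_zero hk0) hk
  rw [← monomialValuation_apply] at hk
  simp only [taylor_coeff_zero, zero_nsmul, WithTop.coe_zero, add_zero] at hk
  obtain ⟨j, hj⟩ := exists_gaussVal_eq (w := w) (δ := δ) (taylor a (P - C (P.eval a)))
  rw [monomialValuation_apply, hj]
  rcases Nat.eq_zero_or_pos j with rfl | hj0
  · simpa [taylor_coeff_zero, ← hk] using lt_top_iff_ne_top.mpr hP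
  · rw [map_sub, taylor_C, coeff_sub, coeff_C, if_neg hj0.ne', sub_zero, ← hk]
    exact (monomialValuation_le P j).lt_of_ne (h j hj0)

end MonomialValuation

section Comparison

variable {L : Type*} [Field L] [Algebra K L] {w : AddValuation L (WithTop Λ)}

theorem map_aeval_lt_map_aeval {ν₁ ν₂ : AddValuation L[X] (WithTop Λ)}
    (h₁ : ∀ c, ν₁ (C c) = w c) (h₂ : ∀ c, ν₂ (C c) = w c) {W : K[X]}
    (hW : ∀ i, 0 ≤ w (algebraMap K L (W.coeff i))) (hW0 : w (algebraMap K L (W.coeff 0)) = 0)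
    {u : L} (hu : 0 ≤ w u) (hWu : 0 < w (aeval u W)) {T : L[X]} (hT₁ : 0 < ν₁ (T - C u))
    (hT₂ : 0 < ν₂ T) :
    ν₂ (aeval T W) < ν₁ (aeval T W) := by
  have hint : ∀ ν : AddValuation L[X] (WithTop Λ), (∀ c, ν (C c) = w c) →
      ∀ i, 0 ≤ ν (algebraMap K L[X] (W.coeff i)) := fun ν hν i => by
    rw [algebraMap_apply, hν]; exact hW i
  rw [ν₂.map_aeval_eq_zero_of_pos (hint ν₂ h₂) (by rw [algebraMap_apply, h₂, hW0]) hT₂]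
  refine ν₁.pos_map_aeval_of_pos_map_sub (hint ν₁ h₁) (by rwa [h₁]) ?_ hT₁
  rwa [← algebraMap_eq, aeval_algebraMap_apply, algebraMap_eq, h₁]

variable [Algebra.IsAlgebraic K L]

theorem exists_map_lt_of_lt_sub_C {ν₁ ν₂ : AddValuation L[X] (WithTop Λ)}
    (h₁ : ∀ c, ν₁ (C c) = w c) (h₂ : ∀ c, ν₂ (C c) = w c) {f : K[X]} {x : L}
    (hx : w x < ν₁ (f.map (algebraMap K L) - C x))
    (hlt : ν₁ (f.map (algebraMap K L)) < ν₂ (f.map (algebraMap K L))) :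
    ∃ g : K[X], ν₂ (g.map (algebraMap K L)) < ν₁ (g.map (algebraMap K L)) := by
  set F := f.map (algebraMap K L)
  have hx0 : x ≠ 0 := w.ne_top_iff.mp hx.ne_top
  have hF : ν₁ F = w x := by
    have h := ν₁.map_add_eq_of_lt_left (x := C x) (y := F - C x) (by rwa [h₁])
    rwa [add_sub_cancel, h₁] at h
  set S := C x⁻¹ * F
  have hCS : C x * S = F := by rw [← mul_assoc, ← C_mul, mul_inv_cancel₀ hx0, C_1, one_mul]
  have hS₁ : 0 < ν₁ (S - 1) :=
    ν₁.pos_of_lt_map_mul (a := C x) (by rwa [mul_sub, hCS, mul_one, h₁])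
  have hS₂ : 0 < ν₂ S := ν₂.pos_of_lt_map_mul (a := C x) (by rwa [hCS, h₂, ← hF])
  obtain ⟨N, hN, π, hπ, hπx⟩ := w.exists_map_algebraMap_eq_nsmul (K := K) hx0
  have hπ' : algebraMap K L π ≠ 0 := (_root_.map_ne_zero _).mpr hπ
  set u := (algebraMap K L π)⁻¹ * x ^ N
  have hu : w u = 0 := by
    refine WithTop.add_left_cancel (w.ne_top_iff.mpr hπ') ?_
    rw [← w.map_mul, mul_inv_cancel_left₀ hπ', add_zero, hπx, w.map_pow]
  obtain ⟨W, hW, hW0, hWu⟩ := w.exists_aeval_pos_of_map_eq_zero (K := K) hu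
  set T := C u * S ^ N
  have hT : C (algebraMap K L π) * T = (f ^ N).map (algebraMap K L) := by
    rw [Polynomial.map_pow]
    change _ = F ^ N
    rw [← hCS, mul_pow, ← mul_assoc, ← C_mul, mul_inv_cancel_left₀ hπ', C_pow]
  have hT₁ : 0 < ν₁ (T - C u) := by
    rw [show T - C u = C u * (S ^ N - 1 ^ N) by ring, ν₁.map_mul, h₁, hu, zero_add]
    exact ν₁.pos_map_pow_sub_pow (by simp) (by simpa using hS₁) N
  have hT₂ : 0 < ν₂ T := by
    rw [ν₂.map_mul, h₂, hu, zero_add, ν₂.map_pow]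
    exact nsmul_pos hS₂ hN.ne'
  refine ⟨aeval (f ^ N) (W.scaleRoots π), ?_⟩
  rw [map_aeval_scaleRoots W _ π hT, ν₁.map_mul, ν₂.map_mul, ← C_pow, h₁, h₂]
  exact WithTop.add_lt_add_left (w.ne_top_iff.mpr (pow_ne_zero _ hπ'))
    (map_aeval_lt_map_aeval h₁ h₂ hW hW0 hu.ge hWu hT₁ hT₂)

theorem lt_of_monomialValuation_lt {a b : L} {δ ε : Λ}
    (hle : ∀ f : K[X], monomialValuation w a δ (f.map (algebraMap K L)) ≤
      monomialValuation w b ε (f.map (algebraMap K L)))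
    {f₀ : K[X]} (hf₀ : monomialValuation w a δ (f₀.map (algebraMap K L)) ≠
      monomialValuation w b ε (f₀.map (algebraMap K L))) :
    δ < ε := by
  classical
  set μ := monomialValuation w a δ
  set η := monomialValuation w b ε
  obtain ⟨f, hf, hmin⟩ := (measure natDegree).wf.has_min
    {f : K[X] | μ (f.map (algebraMap K L)) ≠ η (f.map (algebraMap K L))} ⟨f₀, hf₀⟩
  have hmin' : ∀ g : K[X], g.natDegree < f.natDegree →
      μ (g.map (algebraMap K L)) = η (g.map (algebraMap K L)) :=
    fun g hg => not_ne_iff.mp fun hne => hmin g hne hg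
  have hlt := (hle f).lt_of_ne hf
  set F := f.map (algebraMap K L)
  by_cases hs : ∃ s, 0 < s ∧ μ F = w ((taylor a F).coeff s) + ((s • δ : Λ) : WithTop Λ)
  · obtain ⟨s, hs, hμ⟩ := hs
    have hsf : s ≤ f.natDegree := by
      have hc : (taylor a F).coeff s ≠ 0 := fun h =>
        hlt.ne_top (by rw [hμ, h, w.map_zero, top_add])
      simpa [F, natDegree_taylor] using le_natDegree_of_ne_zero hc
    refine lt_of_monomialValuation_eq_of_lt hμ hlt ?_
    rw [← map_hasseDeriv]
    exact (hmin' _ ((natDegree_hasseDeriv_le f s).trans_lt (by omega))).ge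
  · push Not at hs
    obtain ⟨g, hg⟩ := exists_map_lt_of_lt_sub_C monomialValuation_C monomialValuation_C
      (map_eval_lt_monomialValuation_sub_C hlt.ne_top hs) hlt
    exact ((hle g).not_gt hg).elim

end Comparison

end Polynomial

namespace IsValOnField

variable {v : AlgebraicClosure K → WithTop Λ}

theorem map_one (hv : IsValOnField v) : v 1 = 0 := by
  have h : v 1 + v 1 = v 1 + 0 := by rw [← hv.map_mul, mul_one, add_zero]
  exact WithTop.add_left_cancel (fun h1 => one_ne_zero ((hv.eq_top_iff 1).mp h1)) h

def toAddValuation (hv : IsValOnField v) :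
    AddValuation (AlgebraicClosure K) (WithTop Λ) :=
  AddValuation.of v ((hv.eq_top_iff 0).mpr rfl) hv.map_one hv.min_le_add hv.map_mul

theorem monoVal_eq (hv : IsValOnField v) (a : AlgebraicClosure K) (δ : Λ) :
    monoVal v a δ = ⇑(monomialValuation hv.toAddValuation a δ) := by
  funext P
  rw [monomialValuation_apply, gaussVal, natDegree_taylor]
  rfl

end IsValOnField

theorem ltRadius_general
    (v : AlgebraicClosure K → WithTop Λ) (hv : IsValOnField v)
    (a b : AlgebraicClosure K) (δ ε : Λ)
    (h : valLT (resK (monoVal v a δ)) (resK (monoVal v b ε))) :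
    δ < ε := by
  obtain ⟨hle, hne⟩ := h
  rw [hv.monoVal_eq, hv.monoVal_eq] at hle hne
  obtain ⟨f, hf⟩ := Function.ne_iff.mp hne
  exact lt_of_monomialValuation_lt hle hf

/-- if `res_K(v_{a,δ}) < res_K(v_{b,ε})`, then `δ < ε`. -/
theorem ltRadius
    (v : AlgebraicClosure K → WithTop Λ) (hv : IsValOnField v)
    (hdiv : IsDivisible Λ)
    (a b : AlgebraicClosure K) (δ ε : Λ)
    (h : valLT (resK (monoVal v a δ)) (resK (monoVal v b ε))) :
    δ < ε :=
  ltRadius_general v hv a b δ ε h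
end
end

section
/- Let μ = res_K(v_{b,δ}) for some (b,δ) ∈ K̄×Λ. Then for every nonconstant f ∈ K[x], the following are equivalent: (i) ε_μ(f) = δ; (ii) there exists a root a ∈ K̄ of f such that res_K(v_{a,δ}) = μ. -/
open Polynomial

noncomputable section

variable {K Λ : Type*} [Field K] [AddCommGroup Λ] [LinearOrder Λ] [IsOrderedAddMonoid Λ]

/-! For a root `a` of `f`, the constant Taylor coefficient `f(a)` vanishes, so the minimum
defining `v_{a,δ}(f)` is attained at some index `s ≥ 1`, and the `s`-th Hasse derivative realises
`ε = δ`; moreover `v_{a,δ}` only depends on the closed ball `B(a,δ)`. Conversely, if every root of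
`f` lies at distance `< δ` from `b`, then expanding `f = c ∏ (x - t)` around `b` shows that the
constant term alone realises `v_{b,δ}(f)`, which forces `μ(f) < sδ + μ(∂_s f)` for all `s ≥ 1`. -/

namespace AddValuation

section

variable {R Γ₀ : Type*} [Ring R] [LinearOrderedAddCommMonoidWithTop Γ₀] (w : AddValuation R Γ₀)

theorem map_natCast_nonneg (n : ℕ) : 0 ≤ w n := by
  simpa using w.map_le_sum (s := Finset.range n) (f := fun _ => (1 : R)) (g := 0) (by simp)

theorem le_map_sum_add {ι : Type*} {s : Finset ι} {f : ι → R} {γ d : Γ₀}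
    (h : ∀ i ∈ s, γ ≤ w (f i) + d) : γ ≤ w (∑ i ∈ s, f i) + d := by
  rcases s.eq_empty_or_nonempty with rfl | hs
  · simp
  obtain ⟨i, hi, hmin⟩ := s.exists_min_image (fun i => w (f i)) hs
  exact (h i hi).trans (by gcongr; exact w.map_le_sum hmin)

end

variable {R : Type*} [CommRing R] (w : AddValuation R (WithTop Λ))

theorem map_coeff_zero_lt_map_coeff_add_nsmul {δ : Λ} {c : R} (hc : w c ≠ ⊤) {s : Multiset R}
    (hs : ∀ u ∈ s, w u < δ) {k : ℕ} (hk : 1 ≤ k) :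
    w ((C c * (s.map fun u => X - C u).prod).coeff 0) <
      w ((C c * (s.map fun u => X - C u).prod).coeff k) + (k • δ : Λ) := by
  induction s using Multiset.induction_on generalizing k with
  | empty =>
    have hk0 : k ≠ 0 := by omega
    simpa [coeff_C, hk0, lt_top_iff_ne_top] using hc
  | cons u s ih =>
    set P := C c * (s.map fun u => X - C u).prod
    have hu : w u < δ := hs u (Multiset.mem_cons_self u s)
    have hP : ∀ k, 1 ≤ k → w (P.coeff 0) < w (P.coeff k) + (k • δ : Λ) :=
      fun k hk => ih (fun u hu => hs u (Multiset.mem_cons_of_mem hu)) hk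
    have hP0 : w (P.coeff 0) ≠ ⊤ := ne_top_of_lt (hP 1 le_rfl)
    have hPj : ∀ j, w (P.coeff 0) ≤ w (P.coeff j) + (j • δ : Λ) := by
      intro j
      rcases j.eq_zero_or_pos with rfl | hj
      · simp
      · exact (hP j hj).le
    have hmul : C c * ((u ::ₘ s).map fun u => X - C u).prod = P * (X - C u) := by
      simp only [P, Multiset.map_cons, Multiset.prod_cons]
      ring
    obtain ⟨j, rfl⟩ : ∃ j, k = j + 1 := ⟨k - 1, by omega⟩
    rw [hmul, mul_coeff_zero, coeff_mul_X_sub_C, w.map_mul]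
    calc w (P.coeff 0) + w ((X - C u).coeff 0)
        = w (P.coeff 0) + w u := by simp
      _ < min (w (P.coeff j)) (w (P.coeff (j + 1) * u)) + ((j + 1) • δ : Λ) := by
        rw [← min_add_add_right]
        refine lt_min ?_ ?_
        · calc w (P.coeff 0) + w u < w (P.coeff 0) + δ := WithTop.add_lt_add_left hP0 hu
            _ ≤ w (P.coeff j) + (j • δ : Λ) + δ := by gcongr; exact hPj j
            _ = w (P.coeff j) + ((j + 1) • δ : Λ) := by
              rw [succ_nsmul, WithTop.coe_add, add_assoc]
        · have := WithTop.add_lt_add_left (ne_top_of_lt hu) (hP (j + 1) (by omega))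
          rw [w.map_mul]
          convert this using 1 <;> ac_rfl
      _ ≤ w (P.coeff j - P.coeff (j + 1) * u) + ((j + 1) • δ : Λ) := by
        gcongr
        exact w.map_sub _ _

end AddValuation

theorem IsValOnField.map_one_s4 {v : AlgebraicClosure K → WithTop Λ} (hv : IsValOnField v) :
    v 1 = 0 := by
  have hsq := hv.map_mul 1 1
  rw [mul_one] at hsq
  lift v 1 to Λ using (hv.eq_top_iff 1).not.2 one_ne_zero with g
  rw [← WithTop.coe_add, WithTop.coe_eq_coe, left_eq_add] at hsq
  rw [hsq, WithTop.coe_zero]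

def IsValOnField.toAddValuation_s4 {v : AlgebraicClosure K → WithTop Λ} (hv : IsValOnField v) :
    AddValuation (AlgebraicClosure K) (WithTop Λ) :=
  AddValuation.of v ((hv.eq_top_iff 0).2 rfl) hv.map_one_s4 hv.min_le_add hv.map_mul

namespace Polynomial

theorem hasseDeriv_map {R S : Type*} [Semiring R] [Semiring S] (φ : R →+* S) (s : ℕ)
    (f : R[X]) : (hasseDeriv s f).map φ = hasseDeriv s (f.map φ) := by
  ext n
  simp [hasseDeriv_coeff, coeff_map]

theorem taylor_hasseDeriv_coeff {R : Type*} [CommRing R] (b : R) (s j : ℕ) (F : R[X]) :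
    (taylor b (hasseDeriv s F)).coeff j = ((j + s).choose j : R) * (taylor b F).coeff (j + s) := by
  have h := LinearMap.congr_fun (hasseDeriv_comp (R := R) j s) F
  rw [LinearMap.comp_apply, LinearMap.smul_apply] at h
  rw [taylor_coeff, taylor_coeff, h, nsmul_eq_mul, eval_mul, eval_natCast]

theorem taylor_eq_C_leadingCoeff_mul_prod {k : Type*} [Field k] [IsAlgClosed k] (F : k[X]) (b : k) :
    taylor b F = C F.leadingCoeff * ((F.roots.map (· - b)).map fun u => X - C u).prod := by
  conv_lhs => rw [← C_leadingCoeff_mul_prod_multiset_X_sub_C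
    (splits_iff_card_roots.mp (IsAlgClosed.splits F))]
  rw [← taylorAlgHom_apply, map_mul, map_multiset_prod]
  simp [taylor_C, Multiset.map_map, sub_sub_eq_add_sub]

end Polynomial

section MonomialValuation

variable (w : AddValuation (AlgebraicClosure K) (WithTop Λ)) (δ : Λ)

theorem monoVal_le_coeff (a : AlgebraicClosure K) (F : (AlgebraicClosure K)[X]) (k : ℕ) :
    monoVal w a δ F ≤ w ((taylor a F).coeff k) + (k • δ : Λ) := by
  by_cases hk : k < F.natDegree + 1
  · exact Finset.inf_le (Finset.mem_range.mpr hk)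
  · rw [coeff_eq_zero_of_natDegree_lt (by rw [natDegree_taylor]; omega)]
    simp

theorem le_monoVal {a : AlgebraicClosure K} {F : (AlgebraicClosure K)[X]} {γ : WithTop Λ}
    (h : ∀ k, γ ≤ w ((taylor a F).coeff k) + (k • δ : Λ)) : γ ≤ monoVal w a δ F :=
  Finset.le_inf fun k _ => h k

theorem exists_monoVal_eq (a : AlgebraicClosure K) (F : (AlgebraicClosure K)[X]) :
    ∃ k, monoVal w a δ F = w ((taylor a F).coeff k) + (k • δ : Λ) := by
  obtain ⟨k, -, hk⟩ := Finset.exists_mem_eq_inf (Finset.range (F.natDegree + 1))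
    Finset.nonempty_range_add_one (fun k => w ((taylor a F).coeff k) + (k • δ : Λ))
  exact ⟨k, hk⟩

theorem monoVal_ne_top {a : AlgebraicClosure K} {F : (AlgebraicClosure K)[X]} (hF : F ≠ 0) :
    monoVal w a δ F ≠ ⊤ := by
  have hlc : (taylor a F).coeff F.natDegree ≠ 0 := by
    rw [← natDegree_taylor F a, ← leadingCoeff, leadingCoeff_ne_zero]
    exact fun h => hF (taylor_injective a (by simpa using h))
  exact ne_top_of_le_ne_top (WithTop.add_ne_top.mpr ⟨w.ne_top_iff.mpr hlc, WithTop.coe_ne_top⟩)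
    (monoVal_le_coeff w δ a F F.natDegree)

theorem exists_le_nsmul_add_monoVal_hasseDeriv (b : AlgebraicClosure K)
    (F : (AlgebraicClosure K)[X]) (s : ℕ) :
    ∃ j, w ((taylor b F).coeff (j + s)) + ((j + s) • δ : Λ) ≤
      (s • δ : Λ) + monoVal w b δ (hasseDeriv s F) := by
  obtain ⟨j, hj⟩ := exists_monoVal_eq w δ b (hasseDeriv s F)
  refine ⟨j, ?_⟩
  calc w ((taylor b F).coeff (j + s)) + ((j + s) • δ : Λ)
      = (s • δ : Λ) + (0 + w ((taylor b F).coeff (j + s)) + (j • δ : Λ)) := by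
        rw [zero_add, add_nsmul, WithTop.coe_add]; ac_rfl
    _ ≤ (s • δ : Λ) + monoVal w b δ (hasseDeriv s F) := by
        rw [hj, taylor_hasseDeriv_coeff, w.map_mul]
        gcongr
        exact w.map_natCast_nonneg _

theorem monoVal_le_nsmul_add_monoVal_hasseDeriv (b : AlgebraicClosure K)
    (F : (AlgebraicClosure K)[X]) (s : ℕ) :
    monoVal w b δ F ≤ (s • δ : Λ) + monoVal w b δ (hasseDeriv s F) := by
  obtain ⟨j, hj⟩ := exists_le_nsmul_add_monoVal_hasseDeriv w δ b F s
  exact (monoVal_le_coeff w δ b F (j + s)).trans hj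

theorem monoVal_lt_nsmul_add_monoVal_hasseDeriv {b : AlgebraicClosure K}
    {F : (AlgebraicClosure K)[X]}
    (hdom : ∀ k, 1 ≤ k → w ((taylor b F).coeff 0) < w ((taylor b F).coeff k) + (k • δ : Λ))
    {s : ℕ} (hs : 1 ≤ s) :
    monoVal w b δ F < (s • δ : Λ) + monoVal w b δ (hasseDeriv s F) := by
  obtain ⟨j, hj⟩ := exists_le_nsmul_add_monoVal_hasseDeriv w δ b F s
  calc monoVal w b δ F ≤ w ((taylor b F).coeff 0) := by simpa using monoVal_le_coeff w δ b F 0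
    _ < _ := hdom (j + s) (by omega)
    _ ≤ _ := hj

theorem monoVal_le_monoVal_of_le {a b : AlgebraicClosure K} (hab : (δ : WithTop Λ) ≤ w (b - a))
    (F : (AlgebraicClosure K)[X]) : monoVal w a δ F ≤ monoVal w b δ F := by
  refine le_monoVal w δ fun j => ?_
  -- with `c` the Taylor coefficients at `a`, the `j`-th one at `b` is
  -- `∑ i, C(i+j, j) c_{i+j} (b-a)^i`
  rw [← sub_add_cancel b a, ← taylor_taylor, taylor_coeff, eval_eq_sum_range]
  refine w.le_map_sum_add fun i _ => ?_
  rw [hasseDeriv_coeff, w.map_mul, w.map_mul]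
  calc monoVal w a δ F ≤ w ((taylor a F).coeff (i + j)) + ((i + j) • δ : Λ) :=
        monoVal_le_coeff w δ a F (i + j)
    _ = 0 + w ((taylor a F).coeff (i + j)) + (i • δ : Λ) + (j • δ : Λ) := by
        rw [zero_add, add_nsmul, WithTop.coe_add, add_assoc]
    _ ≤ _ := by
        gcongr
        · exact w.map_natCast_nonneg _
        · rw [w.map_pow, WithTop.coe_nsmul]
          exact nsmul_le_nsmul_right hab i

theorem monoVal_eq_of_le {a b : AlgebraicClosure K} (hab : (δ : WithTop Λ) ≤ w (b - a)) :
    monoVal w a δ = monoVal w b δ :=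
  funext fun F => (monoVal_le_monoVal_of_le w δ hab F).antisymm
    (monoVal_le_monoVal_of_le w δ (w.map_sub_swap b a ▸ hab) F)

end MonomialValuation

section Restriction

variable (w : AddValuation (AlgebraicClosure K) (WithTop Λ)) (δ : Λ)

theorem isEpsilon_resK_monoVal_of_aeval_eq_zero {a : AlgebraicClosure K} {f : K[X]}
    (hf : 0 < f.natDegree) (ha : aeval a f = 0) : IsEpsilon (resK (monoVal w a δ)) f δ := by
  set F := f.map (algebraMap K (AlgebraicClosure K))
  have hF : F ≠ 0 := Polynomial.map_ne_zero (ne_zero_of_natDegree_gt hf)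
  refine ⟨fun s _ _ => ?_, ?_⟩
  · simpa only [resK, hasseDeriv_map] using monoVal_le_nsmul_add_monoVal_hasseDeriv w δ a F s
  obtain ⟨s, hs⟩ := exists_monoVal_eq w δ a F
  have hcs : (taylor a F).coeff s ≠ 0 := by
    intro h0
    exact monoVal_ne_top w δ hF (by rw [hs, h0, w.map_zero, top_add])
  have hs1 : 1 ≤ s := by
    refine Nat.one_le_iff_ne_zero.mpr fun h0 => hcs ?_
    rw [h0, taylor_coeff_zero, eval_map_algebraMap, ha]
  have hFs : (hasseDeriv s F).eval a = (taylor a F).coeff s := (taylor_coeff a F s).symm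
  have hds : hasseDeriv s f ≠ 0 := by
    intro h0
    apply hcs
    rw [← hFs, ← hasseDeriv_map, h0, Polynomial.map_zero, eval_zero]
  have hle : monoVal w a δ (hasseDeriv s F) ≤ w ((taylor a F).coeff s) := by
    simpa [hFs] using monoVal_le_coeff w δ a (hasseDeriv s F) 0
  refine ⟨s, hs1, hds, ?_⟩
  simp only [resK, hasseDeriv_map]
  refine (monoVal_le_nsmul_add_monoVal_hasseDeriv w δ a F s).antisymm ?_
  rw [hs, add_comm]
  gcongr

theorem exists_aeval_eq_zero_le_of_isEpsilon (b : AlgebraicClosure K) {f : K[X]}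
    (h : IsEpsilon (resK (monoVal w b δ)) f δ) :
    ∃ a, aeval a f = 0 ∧ (δ : WithTop Λ) ≤ w (b - a) := by
  obtain ⟨-, s, hs, hds, heq⟩ := h
  by_contra! hfar
  set F := f.map (algebraMap K (AlgebraicClosure K))
  have hF : F ≠ 0 := Polynomial.map_ne_zero fun h0 => hds (by rw [h0, map_zero])
  have hdom : ∀ k, 1 ≤ k →
      w ((taylor b F).coeff 0) < w ((taylor b F).coeff k) + (k • δ : Λ) := by
    intro k hk
    rw [taylor_eq_C_leadingCoeff_mul_prod]
    refine w.map_coeff_zero_lt_map_coeff_add_nsmul (w.ne_top_iff.mpr (leadingCoeff_ne_zero.mpr hF))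
      ?_ hk
    simp only [Multiset.mem_map, forall_exists_index, and_imp]
    rintro _ t ht rfl
    rw [w.map_sub_swap]
    exact hfar t (by rw [← eval_map_algebraMap]; exact isRoot_of_mem_roots ht)
  refine (monoVal_lt_nsmul_add_monoVal_hasseDeriv w δ hdom hs).ne ?_
  simpa only [resK, hasseDeriv_map] using heq

end Restriction

theorem centers_general
    (v : AlgebraicClosure K → WithTop Λ) (hv : IsValOnField v)
    (b : AlgebraicClosure K) (δ : Λ)
    (f : Polynomial K) (hf : 0 < f.natDegree) :
    IsEpsilon (resK (monoVal v b δ)) f δ ↔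
      ∃ a : AlgebraicClosure K, aeval a f = 0 ∧
        resK (monoVal v a δ) = resK (monoVal v b δ) := by
  obtain ⟨w, rfl⟩ : ∃ w : AddValuation (AlgebraicClosure K) (WithTop Λ), ⇑w = v :=
    ⟨hv.toAddValuation_s4, rfl⟩
  constructor
  · intro h
    obtain ⟨a, ha, hba⟩ := exists_aeval_eq_zero_le_of_isEpsilon w δ b h
    exact ⟨a, ha, by rw [monoVal_eq_of_le w δ hba]⟩
  · rintro ⟨a, ha, hres⟩
    exact hres ▸ isEpsilon_resK_monoVal_of_aeval_eq_zero w δ hf ha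

/-- for `μ = res_K(v_{b,δ})` and a nonconstant `f ∈ K[x]`,
`ε_μ(f) = δ` iff there is a root `a ∈ K̄` of `f` with `res_K(v_{a,δ}) = μ`. -/
theorem centers
    (v : AlgebraicClosure K → WithTop Λ) (hv : IsValOnField v)
    (hdiv : IsDivisible Λ)
    (b : AlgebraicClosure K) (δ : Λ)
    (f : Polynomial K) (hf : 0 < f.natDegree) :
    IsEpsilon (resK (monoVal v b δ)) f δ ↔
      ∃ a : AlgebraicClosure K, aeval a f = 0 ∧
        resK (monoVal v a δ) = resK (monoVal v b δ) :=
  centers_general v hv b δ f hf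
end
end

section
/- Let μ < η be valuations on K[x] and let Q ∈ K[x] be an abstract key polynomial for μ such that μ(Q) = η(Q). Then Q is an abstract key polynomial for η. -/
open Polynomial

noncomputable section

variable {K Λ : Type*} [Field K] [AddCommGroup Λ] [LinearOrder Λ] [IsOrderedAddMonoid Λ]

/-!
Since `μ ≤ η`, the two valuations agree on every polynomial of degree `< deg Q`. Otherwise take
such a `g` of least degree with `μ g < η g` and divide: `Q = g q + r` with `deg r < deg g`. Then
`μ (g q) < η (g q)`, `μ r = η r` and `μ Q = η Q` force `μ Q = min (μ (g q)) (μ r)`. But `ε_μ` of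
`g`, `q`, `r` is `< ε_μ Q`, and the Leibniz rule for Hasse derivatives bounds `ε_μ Q` by the
maximum of the three, a contradiction.

Once `μ` and `η` agree on `Q` and below `deg Q`, they have the same `ε` on `Q` and on every
polynomial of smaller degree, because Hasse derivatives lower the degree.
-/

namespace IsValOnPoly

variable {v : AlgebraicClosure K → WithTop Λ} {μ η : K[X] → WithTop Λ}

omit [IsOrderedAddMonoid Λ] in
theorem ne_top (hμ : IsValOnPoly v μ) {f : K[X]} (hf : f ≠ 0) : μ f ≠ ⊤ :=
  mt (hμ.eq_top_iff f).1 hf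

theorem map_one (hμ : IsValOnPoly v μ) : μ 1 = 0 := by
  obtain ⟨a, ha⟩ := WithTop.ne_top_iff_exists.1 (hμ.ne_top one_ne_zero)
  have h := hμ.map_mul 1 1
  rw [one_mul, ← ha, ← WithTop.coe_add, WithTop.coe_inj, left_eq_add] at h
  rw [← ha, h, WithTop.coe_zero]

def toAddValuation (hμ : IsValOnPoly v μ) : AddValuation K[X] (WithTop Λ) :=
  AddValuation.of μ ((hμ.eq_top_iff 0).2 rfl) hμ.map_one hμ.min_le_add hμ.map_mul

theorem map_zero (hμ : IsValOnPoly v μ) : μ 0 = ⊤ := hμ.toAddValuation.map_zero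

theorem map_mul_lt_of_lt (hμ : IsValOnPoly v μ) (hη : IsValOnPoly v η) (hle : valLE μ η)
    {a b : K[X]} (ha : μ a < η a) (hb : b ≠ 0) : μ (a * b) < η (a * b) := by
  rw [hμ.map_mul, hη.map_mul]
  exact (WithTop.add_lt_add_right (hμ.ne_top hb) ha).trans_le (add_le_add_right (hle b) _)

theorem le_min_of_lt_of_eq (hμ : IsValOnPoly v μ) (hη : IsValOnPoly v η) {a b : K[X]}
    (ha : μ a < η a) (hb : μ b = η b) (hab : μ (a + b) = η (a + b)) :
    μ (a + b) ≤ min (μ a) (μ b) := by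
  rcases le_or_gt (η (a + b)) (η a) with h | h
  · have hb' : μ (a + b) ≤ μ b := by
      have : min (η (a + b)) (η a) ≤ η (a + b - a) := hη.toAddValuation.map_sub _ _
      rw [add_sub_cancel_left, min_eq_left h] at this
      exact hab.trans_le (this.trans_eq hb.symm)
    have ha' : μ (a + b) ≤ μ a := by
      have : min (μ (a + b)) (μ b) ≤ μ (a + b - b) := hμ.toAddValuation.map_sub _ _
      rwa [add_sub_cancel_right, min_eq_left hb'] at this
    exact le_min ha' hb'
  · have hb' : μ a < μ b := by
      have : η (a + b - a) = η a := hη.toAddValuation.map_sub_eq_of_lt_right h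
      rw [add_sub_cancel_left] at this
      exact ha.trans_eq (hb.trans this).symm
    have : μ (a + b) = μ a := hμ.toAddValuation.map_add_eq_of_lt_left hb'
    exact this.trans_le (le_min le_rfl hb'.le)

end IsValOnPoly

theorem WithTop.le_coe_add_iff {x : Λ} {a b : WithTop Λ} :
    a ≤ x + b ↔ ((-x : Λ) : WithTop Λ) + a ≤ b := by
  constructor <;> intro h
  · have := add_le_add_right h ((-x : Λ) : WithTop Λ)
    rwa [← add_assoc, ← WithTop.coe_add, neg_add_cancel, WithTop.coe_zero, zero_add] at this
  · have := add_le_add_right h (x : WithTop Λ)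
    rwa [← add_assoc, ← WithTop.coe_add, add_neg_cancel, WithTop.coe_zero, zero_add] at this

theorem exists_nsmul_add_eq_of_ne_top {Γ : Type*} [AddCommGroup Γ] (hdiv : IsDivisible Γ)
    {a b : WithTop Γ} (ha : a ≠ ⊤) (hb : b ≠ ⊤) {s : ℕ} (hs : 0 < s) :
    ∃ γ : Γ, a = ((s • γ : Γ) : WithTop Γ) + b := by
  lift a to Γ using ha
  lift b to Γ using hb
  obtain ⟨γ, hγ⟩ := hdiv (a - b) s hs
  exact ⟨γ, by rw [hγ, ← WithTop.coe_add, sub_add_cancel]⟩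

/-- `ε_μ(f) ≤ E`, stated without presupposing that `ε_μ(f)` exists. -/
def EpsilonLE (μ : K[X] → WithTop Λ) (f : K[X]) (E : Λ) : Prop :=
  ∀ s : ℕ, μ f ≤ ((s • E : Λ) : WithTop Λ) + μ (hasseDeriv s f)

section Epsilon

variable {v : AlgebraicClosure K → WithTop Λ} {μ η : K[X] → WithTop Λ} {f g : K[X]} {e E : Λ}

theorem EpsilonLE.mono (h : EpsilonLE μ f E) {E' : Λ} (hE : E ≤ E') : EpsilonLE μ f E' :=
  fun s => (h s).trans (add_le_add_left (WithTop.coe_le_coe.2 (nsmul_le_nsmul_right hE s)) _)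

theorem epsilonLE_of_natDegree_eq_zero (hμ : IsValOnPoly v μ) (hf : f.natDegree = 0) (E : Λ) :
    EpsilonLE μ f E := by
  rintro (_ | s)
  · simp
  · rw [eq_C_of_natDegree_eq_zero hf, hasseDeriv_C _ _ s.succ_pos, hμ.map_zero, add_top]
    exact le_top

theorem IsEpsilon.epsilonLE (hμ : IsValOnPoly v μ) (h : IsEpsilon μ f e) : EpsilonLE μ f e := by
  intro s
  rcases s.eq_zero_or_pos with rfl | hs
  · simp
  by_cases hf : hasseDeriv s f = 0
  · rw [hf, hμ.map_zero, add_top]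
    exact le_top
  · exact h.1 s hs hf

theorem IsEpsilon.le_of_epsilonLE (hμ : IsValOnPoly v μ) (he : IsEpsilon μ f e)
    (hE : EpsilonLE μ f E) : e ≤ E := by
  obtain ⟨s, hs, hne, heq⟩ := he.2
  have h := heq ▸ hE s
  rw [WithTop.add_le_add_iff_right (hμ.ne_top hne), WithTop.coe_le_coe] at h
  exact (nsmul_le_nsmul_iff_right (by omega)).1 h

theorem EpsilonLE.add (hμ : IsValOnPoly v μ) (hf : EpsilonLE μ f E) (hg : EpsilonLE μ g E)
    (h : μ (f + g) ≤ min (μ f) (μ g)) : EpsilonLE μ (f + g) E := by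
  intro s
  rw [map_add, WithTop.le_coe_add_iff]
  refine hμ.toAddValuation.map_le_add ?_ ?_
  · exact (add_le_add_right (h.trans (min_le_left _ _)) _).trans
      (WithTop.le_coe_add_iff.1 (hf s))
  · exact (add_le_add_right (h.trans (min_le_right _ _)) _).trans
      (WithTop.le_coe_add_iff.1 (hg s))

theorem EpsilonLE.mul (hμ : IsValOnPoly v μ) (hf : EpsilonLE μ f E) (hg : EpsilonLE μ g E) :
    EpsilonLE μ (f * g) E := by
  intro s
  rw [hasseDeriv_mul, WithTop.le_coe_add_iff]
  refine hμ.toAddValuation.map_le_sum fun ij hij => ?_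
  show _ ≤ μ _
  rw [← WithTop.le_coe_add_iff, hμ.map_mul, hμ.map_mul,
    ← Finset.HasAntidiagonal.mem_antidiagonal.1 hij, add_nsmul, WithTop.coe_add, add_add_add_comm]
  exact add_le_add (hf ij.1) (hg ij.2)

theorem exists_isEpsilon (hμ : IsValOnPoly v μ) (hdiv : IsDivisible Λ) (hf : 0 < f.natDegree) :
    ∃ e, IsEpsilon μ f e := by
  classical
  have hf0 : f ≠ 0 := ne_zero_of_natDegree_gt hf
  have hγ : ∀ s, 1 ≤ s → hasseDeriv s f ≠ 0 →
      ∃ γ : Λ, μ f = ((s • γ : Λ) : WithTop Λ) + μ (hasseDeriv s f) := fun s hs hne =>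
    exists_nsmul_add_eq_of_ne_top hdiv (hμ.ne_top hf0) (hμ.ne_top hne) hs
  choose! γ hγ using hγ
  let S := (Finset.Icc 1 f.natDegree).filter fun s => hasseDeriv s f ≠ 0
  have hS : ∀ s, s ∈ S ↔ 1 ≤ s ∧ hasseDeriv s f ≠ 0 := fun s => by
    simp only [S, Finset.mem_filter, Finset.mem_Icc]
    exact ⟨fun h => ⟨h.1.1, h.2⟩, fun h => ⟨⟨h.1, not_lt.1 fun hlt =>
      h.2 (hasseDeriv_eq_zero_of_lt_natDegree f s hlt)⟩, h.2⟩⟩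
  have hdeg : f.natDegree ∈ S := (hS _).2 ⟨hf, by simpa [hasseDeriv_natDegree_eq_C] using hf0⟩
  obtain ⟨t, htS, hmax⟩ := S.exists_max_image γ ⟨_, hdeg⟩
  obtain ⟨ht, htne⟩ := (hS t).1 htS
  refine ⟨γ t, fun s hs hne => ?_, t, ht, htne, hγ t ht htne⟩
  rw [hγ s hs hne]
  have hγs : γ s ≤ γ t := hmax s ((hS s).2 ⟨hs, hne⟩)
  exact add_le_add_left (WithTop.coe_le_coe.2 (nsmul_le_nsmul_right hγs s)) _

omit [IsOrderedAddMonoid Λ] in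
theorem isEpsilon_congr (hf : 0 < f.natDegree)
    (hlow : ∀ g : K[X], g.natDegree < f.natDegree → μ g = η g) (h : μ f = η f) :
    IsEpsilon μ f e ↔ IsEpsilon η f e := by
  have hd : ∀ s, 1 ≤ s → μ (hasseDeriv s f) = η (hasseDeriv s f) := fun s hs =>
    hlow _ ((natDegree_hasseDeriv_le f s).trans_lt (by omega))
  unfold IsEpsilon
  rw [h]
  exact and_congr (forall₂_congr fun s hs => by rw [hd s hs])
    (exists_congr fun s => and_congr_right fun hs => by rw [hd s hs])

end Epsilon

theorem Polynomial.natDegree_add_natDegree_div {Q g : K[X]} (hg : g ≠ 0)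
    (hgQ : g.degree ≤ Q.degree) :
    g.natDegree + (Q / g).natDegree = Q.natDegree := by
  have hQ : Q ≠ 0 := by
    rintro rfl
    exact hg (degree_eq_bot.1 (le_bot_iff.1 (by simpa using hgQ)))
  have hq : Q / g ≠ 0 := mt (Polynomial.div_eq_zero_iff hg).1 hgQ.not_gt
  have h := degree_add_div hg hgQ
  rwa [degree_eq_natDegree hg, degree_eq_natDegree hq, degree_eq_natDegree hQ, ← Nat.cast_add,
    Nat.cast_inj] at h

namespace IsAbstractKeyPol

variable {v : AlgebraicClosure K → WithTop Λ} {μ η : K[X] → WithTop Λ} {Q f g q r : K[X]} {eQ : Λ}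

theorem exists_epsilonLE_lt (hμ : IsValOnPoly v μ) (hdiv : IsDivisible Λ)
    (hQ : IsAbstractKeyPol μ Q) (heQ : IsEpsilon μ Q eQ) (hf : 0 < f.natDegree)
    (hfQ : f.natDegree < Q.natDegree) : ∃ E < eQ, EpsilonLE μ f E :=
  let ⟨e, he⟩ := exists_isEpsilon hμ hdiv hf
  ⟨e, hQ.2 f hf hfQ e eQ he heQ, he.epsilonLE hμ⟩

theorem min_lt_of_mul_add_eq (hμ : IsValOnPoly v μ) (hdiv : IsDivisible Λ)
    (hQ : IsAbstractKeyPol μ Q) (h : g * q + r = Q) (hg : 0 < g.natDegree)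
    (hgQ : g.natDegree < Q.natDegree) (hq : 0 < q.natDegree) (hqQ : q.natDegree < Q.natDegree)
    (hrQ : r.natDegree < Q.natDegree) : min (μ (g * q)) (μ r) < μ Q := by
  obtain ⟨eQ, heQ⟩ := exists_isEpsilon hμ hdiv (hg.trans hgQ)
  obtain ⟨Eg, hEg, hg'⟩ := hQ.exists_epsilonLE_lt hμ hdiv heQ hg hgQ
  obtain ⟨Eq, hEq, hq'⟩ := hQ.exists_epsilonLE_lt hμ hdiv heQ hq hqQ
  obtain ⟨Er, hEr, hr'⟩ : ∃ Er < eQ, EpsilonLE μ r Er := by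
    rcases r.natDegree.eq_zero_or_pos with hr | hr
    · exact ⟨Eg, hEg, epsilonLE_of_natDegree_eq_zero hμ hr Eg⟩
    · exact hQ.exists_epsilonLE_lt hμ hdiv heQ hr hrQ
  by_contra! hmin
  set E := max (max Eg Eq) Er
  have hQE : EpsilonLE μ Q E := h ▸
    ((hg'.mono (le_max_left _ _ |>.trans (le_max_left _ _))).mul hμ
      (hq'.mono (le_max_right _ _ |>.trans (le_max_left _ _)))).add hμ
      (hr'.mono (le_max_right _ _)) (h ▸ hmin)
  exact (heQ.le_of_epsilonLE hμ hQE).not_gt (max_lt (max_lt hEg hEq) hEr)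

theorem map_eq_of_natDegree_lt (hμ : IsValOnPoly v μ) (hη : IsValOnPoly v η)
    (hdiv : IsDivisible Λ) (hle : valLE μ η) (hQ : IsAbstractKeyPol μ Q) (heq : μ Q = η Q)
    (hg : g.natDegree < Q.natDegree) : μ g = η g := by
  induction hn : g.natDegree using Nat.strong_induction_on generalizing g with
  | _ n ih =>
  subst hn
  rcases g.natDegree.eq_zero_or_pos with h0 | hpos
  · rw [eq_C_of_natDegree_eq_zero h0, hμ.extends_v, hη.extends_v]
  by_contra hne
  have hg0 : g ≠ 0 := ne_zero_of_natDegree_gt hpos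
  have hdeg := natDegree_add_natDegree_div hg0 (degree_lt_degree hg).le
  have hr : (Q % g).natDegree < g.natDegree := natDegree_mod_lt Q hpos.ne'
  have hq0 : Q / g ≠ 0 := ne_zero_of_natDegree_gt (show 0 < (Q / g).natDegree by omega)
  have hmin := hQ.min_lt_of_mul_add_eq hμ hdiv (EuclideanDomain.div_add_mod Q g) hpos hg
    (by omega) (by omega) (hr.trans hg)
  have hle_min := hμ.le_min_of_lt_of_eq hη
    (hμ.map_mul_lt_of_lt hη hle ((hle g).lt_of_ne hne) hq0)
    (ih _ hr (hr.trans hg) rfl) (by rw [EuclideanDomain.div_add_mod]; exact heq)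
  rw [EuclideanDomain.div_add_mod] at hle_min
  exact hle_min.not_gt hmin

end IsAbstractKeyPol

theorem abstractKeyPolClose_general
    (v : AlgebraicClosure K → WithTop Λ)
    (hdiv : IsDivisible Λ)
    (μ η : Polynomial K → WithTop Λ)
    (hμ : IsValOnPoly v μ) (hη : IsValOnPoly v η)
    (hlt : valLT μ η)
    (Q : Polynomial K) (hQ : IsAbstractKeyPol μ Q) (heq : μ Q = η Q) :
    IsAbstractKeyPol η Q := by
  have hagree : ∀ g : K[X], g.natDegree < Q.natDegree → μ g = η g := fun _ hg =>
    hQ.map_eq_of_natDegree_lt hμ hη hdiv hlt.1 heq hg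
  refine ⟨hQ.1, fun f hf hfQ e eQ hef heQ => hQ.2 f hf hfQ e eQ ?_ ?_⟩
  · exact (isEpsilon_congr hf (fun g hg => hagree g (hg.trans hfQ)) (hagree f hfQ)).2 hef
  · exact (isEpsilon_congr (hf.trans hfQ) hagree heq).2 heQ

/-- if `μ < η`, `Q` is an abstract key polynomial for `μ` and `μ(Q) = η(Q)`,
then `Q` is an abstract key polynomial for `η`. -/
theorem abstractKeyPolClose
    (v : AlgebraicClosure K → WithTop Λ) (hv : IsValOnField v)
    (hdiv : IsDivisible Λ)
    (μ η : Polynomial K → WithTop Λ)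
    (hμ : IsValOnPoly v μ) (hη : IsValOnPoly v η)
    (hlt : valLT μ η)
    (Q : Polynomial K) (hQ : IsAbstractKeyPol μ Q) (heq : μ Q = η Q) :
    IsAbstractKeyPol η Q :=
  abstractKeyPolClose_general v hdiv μ η hμ hη hlt Q hQ heq
end
end
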